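/- arXiv:2410.15239 — 3 statements merged into one kernel-verified Lean document; each statement's English description precedes it below -/
import Mathlib

section
/- For exchangeable real-valued random variables s_1, ..., s_n, s_{n+1}, the probability that s_{n+1} is at most the ⌈(1-α)(n+1)⌉-th smallest value among s_1,...,s_n is at least 1-α. -/
/-!
Let `k = ⌈(1 - α)(n + 1)⌉` and rank each of the `n + 1` scores by the number of scores
strictly below it. In every outcome at least `k` of the scores have rank below `k`, so the
`n + 1` events "score `i` has rank below `k`" have probabilities summing to at least `k`.
Exchangeability makes these probabilities equal, so each is at least `k / (n + 1) ≥ 1 - α`.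
For the last score, having rank below `k` means exactly that it is at most the `k`-th smallest
of the first `n` scores.
-/

open MeasureTheory Filter Set

/-- The `k`-th smallest element of a list of reals (1-indexed). -/
noncomputable def kthSmallest (l : List ℝ) (k : ℕ) : ℝ :=
  (l.mergeSort (fun a b => a ≤ b)).getD (k - 1) 0

open scoped ENNReal
open Finset

theorem List.SortedLE.le_getElem_iff_countP_lt_le {α : Type*} [LinearOrder α] {l : List α}
    (hl : l.SortedLE) {i : ℕ} (hi : i < l.length) (x : α) :
    x ≤ l[i] ↔ l.countP (· < x) ≤ i := by
  constructor
  · intro hx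
    have hdrop : (l.drop i).countP (· < x) = 0 := by
      refine List.countP_eq_zero.2 fun w hw => ?_
      obtain ⟨j, hj, rfl⟩ := List.mem_drop_iff_getElem.1 hw
      simpa using hx.trans (hl.getElem_le_getElem_of_le (Nat.le_add_right i j))
    calc l.countP (· < x) = (l.take i).countP (· < x) + (l.drop i).countP (· < x) := by
          rw [← List.countP_append, List.take_append_drop]
      _ ≤ i := by
          rw [hdrop, add_zero]
          exact List.countP_le_length.trans (by simp)
  · intro hcount
    by_contra! hx
    have htake : (l.take (i + 1)).countP (· < x) = i + 1 := by
      rw [List.countP_eq_length.2 fun w hw => ?_, List.length_take]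
      · omega
      obtain ⟨j, hj, rfl⟩ := List.mem_take_iff_getElem.1 hw
      simpa using (hl.getElem_le_getElem_of_le (by omega)).trans_lt hx
    have := (List.take_sublist (i + 1) l).countP_le (p := (· < x))
    omega

theorem List.countP_ofFn {α : Type*} {m : ℕ} (f : Fin m → α) (p : α → Bool) :
    (List.ofFn f).countP p = #{i | p (f i)} := by
  rw [List.ofFn_eq_map, List.countP_map, ← Finset.card_val, Finset.filter_val,
    Finset.val_univ_fin, Multiset.filter_coe, Multiset.coe_card, List.countP_eq_length_filter]
  simp only [Function.comp_def, Bool.decide_eq_true]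

theorem le_kthSmallest_iff_countP_lt {l : List ℝ} {k : ℕ} (hk1 : 1 ≤ k) (hk : k ≤ l.length)
    (x : ℝ) : x ≤ kthSmallest l k ↔ l.countP (· < x) < k := by
  have hperm := l.mergeSort_perm (fun a b => decide (a ≤ b))
  have hi : k - 1 < (l.mergeSort fun a b => decide (a ≤ b)).length := by
    rw [hperm.length_eq]; omega
  rw [kthSmallest, List.getD_eq_getElem?_getD, List.getElem?_eq_getElem hi, Option.getD_some,
    List.sortedLE_mergeSort.le_getElem_iff_countP_lt_le hi, hperm.countP_eq]
  omega

def strictRank {ι α : Type*} [Fintype ι] [LinearOrder α] (v : ι → α) (i : ι) : ℕ :=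
  #{j | v j < v i}

section StrictRank

variable {ι α : Type*} [Fintype ι] [LinearOrder α]

theorem strictRank_comp_perm (v : ι → α) (σ : Equiv.Perm ι) (i : ι) :
    strictRank (v ∘ σ) i = strictRank v (σ i) :=
  card_equiv σ (by simp)

theorem strictRank_last {n : ℕ} (v : Fin (n + 1) → α) :
    strictRank v (Fin.last n) = #{i : Fin n | v i.castSucc < v (Fin.last n)} := by
  simp only [strictRank, card_filter, Fin.sum_univ_castSucc, lt_irrefl, if_false, add_zero]

/-- If fewer than `k` coordinates had rank below `k`, the smallest of the remaining coordinates
would have all strictly smaller coordinates among those, hence rank below `k` itself. -/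
theorem le_card_filter_strictRank_lt (v : ι → α) {k : ℕ} (hk : k ≤ Fintype.card ι) :
    k ≤ #{i | strictRank v i < k} := by
  classical
  set T : Finset ι := {i | strictRank v i < k}
  by_contra! hT
  have hne : Tᶜ.Nonempty := by
    rw [← card_pos, card_compl]; omega
  obtain ⟨i, hi, hmin⟩ := Tᶜ.exists_min_image v hne
  have hrank : strictRank v i ≤ #T := card_le_card fun j hj => by
    by_contra hjT
    exact (mem_filter.1 hj).2.not_ge (hmin j (mem_compl.2 hjT))
  exact mem_compl.1 hi (mem_filter.2 ⟨mem_univ i, hrank.trans_lt hT⟩)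

end StrictRank

theorem le_kthSmallest_ofFn_castSucc_iff {n k : ℕ} (v : Fin (n + 1) → ℝ) (hk1 : 1 ≤ k)
    (hk : k ≤ n) :
    v (Fin.last n) ≤ kthSmallest (List.ofFn fun i : Fin n => v i.castSucc) k ↔
      strictRank v (Fin.last n) < k := by
  rw [le_kthSmallest_iff_countP_lt hk1 (by simpa using hk), List.countP_ofFn, strictRank_last]
  simp only [decide_eq_true_eq]

section Exchangeable

theorem measurable_comp_perm {ι : Type*} (σ : Equiv.Perm ι) :
    Measurable fun v : ι → ℝ => v ∘ σ :=
  measurable_pi_lambda _ fun i => measurable_pi_apply (σ i)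

variable {ι : Type*} [Fintype ι]

theorem measurableSet_strictRank_lt (i : ι) (k : ℕ) :
    MeasurableSet {v : ι → ℝ | strictRank v i < k} := by
  have hrank : Measurable fun v : ι → ℝ => strictRank v i := by
    simp only [strictRank, card_filter]
    exact Finset.measurable_sum _ fun j _ =>
      Measurable.ite (measurableSet_lt (measurable_pi_apply j) (measurable_pi_apply i))
        measurable_const measurable_const
  exact hrank measurableSet_Iio

variable {ν : Measure (ι → ℝ)}

theorem measure_strictRank_lt_eq (hν : ∀ σ : Equiv.Perm ι, ν.map (· ∘ σ) = ν) (k : ℕ)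
    (i j : ι) : ν {v | strictRank v i < k} = ν {v | strictRank v j < k} := by
  classical
  have hpre : (· ∘ Equiv.swap i j) ⁻¹' {v : ι → ℝ | strictRank v j < k} =
      {v | strictRank v i < k} := by
    ext v
    simp [strictRank_comp_perm]
  rw [← hpre, ← Measure.map_apply (measurable_comp_perm _) (measurableSet_strictRank_lt j k),
    hν]

theorem natCast_le_card_mul_measureReal_strictRank_lt [IsProbabilityMeasure ν]
    (hν : ∀ σ : Equiv.Perm ι, ν.map (· ∘ σ) = ν) {k : ℕ} (hk : k ≤ Fintype.card ι)
    (i : ι) : (k : ℝ) ≤ Fintype.card ι * ν.real {v | strictRank v i < k} := by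
  have hcount : (k : ℝ≥0∞) ≤ Fintype.card ι * ν {v | strictRank v i < k} :=
    calc (k : ℝ≥0∞) = ∫⁻ _, (k : ℝ≥0∞) ∂ν := by simp
      _ ≤ ∫⁻ v, (#{j : ι | strictRank v j < k} : ℝ≥0∞) ∂ν :=
          lintegral_mono fun v => Nat.cast_le.2 (le_card_filter_strictRank_lt v hk)
      _ = ∑ j, ∫⁻ v, {v : ι → ℝ | strictRank v j < k}.indicator 1 v ∂ν := by
          rw [← lintegral_finsetSum _ fun j _ =>
            measurable_one.indicator (measurableSet_strictRank_lt j k)]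
          simp [Set.indicator_apply]
      _ = Fintype.card ι * ν {v | strictRank v i < k} := by
          simp [lintegral_indicator_one (measurableSet_strictRank_lt _ k),
            measure_strictRank_lt_eq hν k _ i]
  simpa [measureReal_def] using ENNReal.toReal_mono (by finiteness) hcount

end Exchangeable

theorem conformal_coverage_general {Ω : Type*} [MeasurableSpace Ω] (μ : Measure Ω)
    [IsProbabilityMeasure μ] {n : ℕ} (s : Fin (n + 1) → Ω → ℝ)
    (hmeas : ∀ i, Measurable (s i))
    (hexch : ∀ σ : Equiv.Perm (Fin (n + 1)),
      Measure.map (fun ω => fun i => s (σ i) ω) μ = Measure.map (fun ω => fun i => s i ω) μ)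
    (α : ℝ)
    (hk : ⌈(1 - α) * (n + 1)⌉₊ ≤ n) :
    1 - α ≤ (μ {ω | s (Fin.last n) ω ≤
      kthSmallest (List.ofFn (fun i : Fin n => s i.castSucc ω)) ⌈(1 - α) * (n + 1)⌉₊}).toReal := by
  set k := ⌈(1 - α) * (n + 1)⌉₊
  rcases le_or_gt (1 - α) 0 with hα_nonpos | hα_pos
  · exact hα_nonpos.trans ENNReal.toReal_nonneg
  have hk1 : 1 ≤ k := Nat.ceil_pos.2 (by positivity)
  set X : Ω → Fin (n + 1) → ℝ := fun ω i => s i ω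
  have hX : Measurable X := measurable_pi_lambda _ hmeas
  have := Measure.isProbabilityMeasure_map (μ := μ) hX.aemeasurable
  have hν : ∀ σ : Equiv.Perm (Fin (n + 1)), (μ.map X).map (· ∘ σ) = μ.map X := fun σ => by
    rw [Measure.map_map (measurable_comp_perm σ) hX]
    exact hexch σ
  have hevent :
      {ω | s (Fin.last n) ω ≤ kthSmallest (List.ofFn fun i : Fin n => s i.castSucc ω) k} =
        X ⁻¹' {v | strictRank v (Fin.last n) < k} :=
    Set.ext fun ω => le_kthSmallest_ofFn_castSucc_iff (X ω) hk1 hk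
  have hbound :=
    natCast_le_card_mul_measureReal_strictRank_lt hν (hk.trans (by simp)) (Fin.last n)
  rw [Fintype.card_fin, Nat.cast_succ] at hbound
  rw [hevent, ← Measure.map_apply hX (measurableSet_strictRank_lt _ _)]
  calc 1 - α ≤ k / (n + 1) := (le_div_iff₀ (by positivity)).2 (Nat.le_ceil _)
    _ ≤ _ := (div_le_iff₀' (by positivity)).2 hbound

/-- Split-conformal coverage: for exchangeable `s_1,…,s_n,s_{n+1}`, the probability that
`s_{n+1}` is at most the `⌈(1-α)(n+1)⌉`-th smallest of `s_1,…,s_n` is at least `1-α`. -/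
theorem conformal_coverage {Ω : Type*} [MeasurableSpace Ω] (μ : Measure Ω)
    [IsProbabilityMeasure μ] {n : ℕ} (s : Fin (n + 1) → Ω → ℝ)
    (hmeas : ∀ i, Measurable (s i))
    (hexch : ∀ σ : Equiv.Perm (Fin (n + 1)),
      Measure.map (fun ω => fun i => s (σ i) ω) μ = Measure.map (fun ω => fun i => s i ω) μ)
    (α : ℝ) (hα : α ∈ Set.Ioo (0 : ℝ) 1)
    (hk : ⌈(1 - α) * (n + 1)⌉₊ ≤ n) :
    1 - α ≤ (μ {ω | s (Fin.last n) ω ≤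
      kthSmallest (List.ofFn (fun i : Fin n => s i.castSucc ω)) ⌈(1 - α) * (n + 1)⌉₊}).toReal :=
  conformal_coverage_general μ s hmeas hexch α hk
end

section
/- For exchangeable real random variables s_1,...,s_n,s_{n+1} with almost surely distinct values, the conformal p-value p = (1 + #{i ≤ n : s_i < s_{n+1}})/(n+1) satisfies P(p ≤ α) ≤ α for every α ∈ [0,1]. -/
/-!
Let `R` be the rank of the test score among all `n + 1` scores, so that `p = (1 + R)/(n + 1)`.
Exchangeability gives every score's rank the same law as `R`, and almost surely distinct scores
have distinct ranks, so for each `j` the `n + 1` events "score `k` has rank `j`" are a.e. disjoint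
and equiprobable: each has probability at most `1/(n + 1)`. Since `p ≤ α` forces
`R < ⌊α (n + 1)⌋`, its probability is at most `⌊α (n + 1)⌋ / (n + 1) ≤ α`.
-/

open MeasureTheory Set

namespace Conformal

open Finset

section Rank

variable {ι β : Type*} [Fintype ι] [LinearOrder β]

def rank (v : ι → β) (k : ι) : ℕ := #{i | v i < v k}

theorem rank_comp_perm (v : ι → β) (σ : Equiv.Perm ι) (k : ι) :
    rank (v ∘ σ) k = rank v (σ k) := by
  unfold rank
  rw [← Finset.card_map σ.toEmbedding]
  congr 1
  ext i
  simp

theorem rank_lt_rank {v : ι → β} {k l : ι} (h : v k < v l) : rank v k < rank v l := by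
  refine Finset.card_lt_card ⟨fun i hi => ?_, fun hsub => ?_⟩
  · simp only [Finset.mem_filter_univ] at hi ⊢
    exact hi.trans h
  · simpa using hsub ((Finset.mem_filter_univ _).2 h)

theorem rank_injective {v : ι → β} (hv : Function.Injective v) : Function.Injective (rank v) := by
  intro k l h
  rcases lt_trichotomy (v k) (v l) with hlt | heq | hgt
  · exact absurd h (rank_lt_rank hlt).ne
  · exact hv heq
  · exact absurd h (rank_lt_rank hgt).ne'

theorem card_filter_castSucc_lt_last {n : ℕ} (v : Fin (n + 1) → β) :
    #{i : Fin n | v i.castSucc < v (Fin.last n)} = rank v (Fin.last n) := by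
  simp only [rank, Finset.card_filter, Fin.sum_univ_castSucc, lt_irrefl, if_false, add_zero]

end Rank

section Probability

variable {Ω ι : Type*} [MeasurableSpace Ω] {μ : Measure Ω} [Fintype ι]

theorem measurable_rank (k : ι) : Measurable fun v : ι → ℝ => rank v k := by
  classical
  simp only [rank, Finset.card_filter]
  exact Finset.measurable_sum _ fun i _ => Measurable.ite
    (measurableSet_lt (measurable_pi_apply i) (measurable_pi_apply k)) measurable_const
    measurable_const

theorem measure_rank_eq_of_exchangeable (X : ι → Ω → ℝ) (hX : ∀ i, Measurable (X i))
    (hexch : ∀ σ : Equiv.Perm ι,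
      Measure.map (fun ω => fun i => X (σ i) ω) μ = Measure.map (fun ω => fun i => X i ω) μ)
    (k l : ι) (j : ℕ) :
    μ {ω | rank (fun i => X i ω) k = j} = μ {ω | rank (fun i => X i ω) l = j} := by
  classical
  have hA : MeasurableSet {v : ι → ℝ | rank v k = j} :=
    measurable_rank k (measurableSet_singleton j)
  have hperm : Measurable fun ω => fun i => X (Equiv.swap k l i) ω :=
    measurable_pi_lambda _ fun i => hX _
  calc μ {ω | rank (fun i => X i ω) k = j}
      = μ ((fun ω => fun i => X i ω) ⁻¹' {v | rank v k = j}) := rfl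
    _ = μ ((fun ω => fun i => X (Equiv.swap k l i) ω) ⁻¹' {v | rank v k = j}) := by
        rw [← Measure.map_apply hperm hA, ← Measure.map_apply (measurable_pi_lambda _ hX) hA,
          hexch]
    _ = μ {ω | rank (fun i => X i ω) l = j} := by
        congr 1
        ext ω
        have := rank_comp_perm (fun i => X i ω) (Equiv.swap k l) k
        rw [Equiv.swap_apply_left] at this
        exact Iff.of_eq (congrArg (· = j) this)

theorem measureReal_le_inv_card_of_aedisjoint [IsProbabilityMeasure μ] {E : ι → Set Ω}
    (hE : ∀ k, NullMeasurableSet (E k) μ) (hdisj : Pairwise (Function.onFun (AEDisjoint μ) E))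
    (heq : ∀ k l, μ (E k) = μ (E l)) (k : ι) :
    μ.real (E k) ≤ (Fintype.card ι : ℝ)⁻¹ := by
  have hpos : (0 : ℝ) < Fintype.card ι := Nat.cast_pos.2 (Fintype.card_pos_iff.2 ⟨k⟩)
  rw [inv_eq_one_div, le_div_iff₀' hpos]
  calc (Fintype.card ι : ℝ) * μ.real (E k) = ∑ l, μ.real (E l) := by
        simp [measureReal_def, heq _ k]
    _ = μ.real (⋃ l ∈ Finset.univ, E l) :=
        (measureReal_biUnion_finset₀ (s := univ) (hdisj.set_pairwise _) fun l _ => hE l).symm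
    _ ≤ 1 := measureReal_le_one

theorem measureReal_rank_eq_le [IsProbabilityMeasure μ] (X : ι → Ω → ℝ)
    (hX : ∀ i, Measurable (X i))
    (hexch : ∀ σ : Equiv.Perm ι,
      Measure.map (fun ω => fun i => X (σ i) ω) μ = Measure.map (fun ω => fun i => X i ω) μ)
    (hinj : ∀ᵐ ω ∂μ, Function.Injective fun i => X i ω) (k : ι) (j : ℕ) :
    μ.real {ω | rank (fun i => X i ω) k = j} ≤ (Fintype.card ι : ℝ)⁻¹ :=
  measureReal_le_inv_card_of_aedisjoint (E := fun l => {ω | rank (fun i => X i ω) l = j})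
    (fun l => ((measurable_rank l).comp (measurable_pi_lambda _ hX)
      (measurableSet_singleton j)).nullMeasurableSet)
    (fun _ _ hne => measure_mono_null (t := {ω | ¬Function.Injective fun i => X i ω})
      (fun ⦃_⦄ ⟨h, h'⟩ hω => hne (rank_injective hω (h.trans h'.symm))) (ae_iff.1 hinj))
    (fun l l' => measure_rank_eq_of_exchangeable X hX hexch l l' j) k

theorem measureReal_lt_le_of_forall_eq_le (R : Ω → ℕ) {c : ℝ}
    (h : ∀ j, μ.real {ω | R ω = j} ≤ c) (m : ℕ) : μ.real {ω | R ω < m} ≤ m * c :=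
  calc μ.real {ω | R ω < m} = μ.real (⋃ j ∈ range m, {ω | R ω = j}) := by
        congr 1; ext; simp
    _ ≤ ∑ j ∈ range m, μ.real {ω | R ω = j} := measureReal_biUnion_finset_le _ _
    _ ≤ ∑ _j ∈ range m, c := sum_le_sum fun j _ => h j
    _ = m * c := by simp

end Probability

end Conformal

open Conformal in
/-- Conformal p-value validity: for exchangeable, a.s. distinct `s_1,…,s_n,s_{n+1}`, the p-value
`p = (1 + #{i ≤ n : s_i < s_{n+1}})/(n+1)` satisfies `P(p ≤ α) ≤ α` for every `α ∈ [0,1]`. -/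
theorem conformal_pvalue_valid {Ω : Type*} [MeasurableSpace Ω] (μ : Measure Ω)
    [IsProbabilityMeasure μ] {n : ℕ} (s : Fin (n + 1) → Ω → ℝ)
    (hmeas : ∀ i, Measurable (s i))
    (hexch : ∀ σ : Equiv.Perm (Fin (n + 1)),
      Measure.map (fun ω => fun i => s (σ i) ω) μ = Measure.map (fun ω => fun i => s i ω) μ)
    (hdist : μ {ω | ∃ i j : Fin (n + 1), i ≠ j ∧ s i ω = s j ω} = 0) :
    ∀ α ∈ Set.Icc (0 : ℝ) 1,
      (μ {ω | ((1 : ℝ) + (Finset.univ.filter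
          (fun i : Fin n => s i.castSucc ω < s (Fin.last n) ω)).card) / (n + 1) ≤ α}).toReal
        ≤ α := by
  rintro α ⟨hα, -⟩
  have hinj : ∀ᵐ ω ∂μ, Function.Injective fun i => s i ω := by
    rw [ae_iff]
    simpa [Function.Injective, and_comm] using hdist
  have hrank (j : ℕ) : μ.real {ω | rank (fun i => s i ω) (Fin.last n) = j} ≤ ((n : ℝ) + 1)⁻¹ := by
    simpa using measureReal_rank_eq_le s hmeas hexch hinj (Fin.last n) j
  set m := ⌊α * (n + 1)⌋₊
  have hsub : {ω | ((1 : ℝ) + (Finset.univ.filter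
      (fun i : Fin n => s i.castSucc ω < s (Fin.last n) ω)).card) / (n + 1) ≤ α}
      ⊆ {ω | rank (fun i => s i ω) (Fin.last n) < m} := by
    intro ω hω
    rw [mem_ofPred_eq, card_filter_castSucc_lt_last (fun i => s i ω),
      div_le_iff₀ (by positivity)] at hω
    exact Nat.le_floor (by push_cast; linarith)
  calc μ.real _ ≤ μ.real {ω | rank (fun i => s i ω) (Fin.last n) < m} := measureReal_mono hsub
    _ ≤ m * ((n : ℝ) + 1)⁻¹ := measureReal_lt_le_of_forall_eq_le _ hrank m
    _ ≤ α * (n + 1) * ((n : ℝ) + 1)⁻¹ := by gcongr; exact Nat.floor_le (by positivity)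
    _ = α := by field_simp
end

section
/- Let s, s_1, ..., s_n be i.i.d. real random variables whose common CDF F is Lipschitz continuous, and let q̂_{α/2} be the ⌊(α/2)n⌋-th order statistic of s_1,...,s_n. Then lim_{n→∞} P(s < q̂_{α/2}) ≤ α/2. -/
/-!
Since `F` is continuous, for every `δ > 0` some `q` has `F q = α/2 + δ`. If `s < q̂` then either
`s < q`, an event of probability at most `F q`, or fewer than `⌊(α/2) n⌋ ≤ (F q - δ) n` of the
samples lie in `(-∞, q]`, i.e. the empirical CDF at `q` is at least `δ` below `F q`. By the strong
law of large numbers the probability of the latter tends to `0`, so the `limsup` is at most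
`α/2 + δ`.
-/

open MeasureTheory Filter Set ProbabilityTheory

open Topology

theorem countP_le_lt_of_lt_kthSmallest {l : List ℝ} {k : ℕ} (hk : 1 ≤ k) (hkl : k ≤ l.length)
    {x : ℝ} (hx : x < kthSmallest l k) : l.countP (· ≤ x) < k := by
  set s := l.mergeSort (fun a b => a ≤ b)
  have hks : k - 1 < s.length := by rw [List.length_mergeSort]; omega
  have hxs : x < s[k - 1] := by rwa [kthSmallest, List.getD_eq_getElem _ _ hks] at hx
  have hdrop : (s.drop (k - 1)).countP (· ≤ x) = 0 := by
    have hsorted : (s.drop (k - 1)).Pairwise (· ≤ ·) := (List.pairwise_mergeSort' _ l).drop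
    rw [List.drop_eq_getElem_cons hks] at hsorted ⊢
    refine List.countP_eq_zero.2 fun a ha => ?_
    have hle : s[k - 1] ≤ a := by
      rcases List.mem_cons.1 ha with rfl | ha
      · exact le_rfl
      · exact List.rel_of_pairwise_cons hsorted ha
    simpa using hxs.trans_le hle
  calc l.countP (· ≤ x) = s.countP (· ≤ x) := ((List.mergeSort_perm l _).countP_eq _).symm
    _ = (s.take (k - 1)).countP (· ≤ x) + (s.drop (k - 1)).countP (· ≤ x) := by
      rw [← List.countP_append, List.take_append_drop]
    _ ≤ k - 1 + 0 := add_le_add (List.countP_le_length.trans (List.length_take_le _ _)) hdrop.le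
    _ < k := by omega

noncomputable def empiricalCDF (l : List ℝ) (x : ℝ) : ℝ := l.countP (· ≤ x) / l.length

theorem countP_ofFn_le_eq_sum_indicator (f : ℕ → ℝ) (x : ℝ) (n : ℕ) :
    ((List.ofFn fun i : Fin n => f i).countP (· ≤ x) : ℝ) =
      ∑ i ∈ Finset.range n, (Iic x).indicator 1 (f i) := by
  induction n with
  | zero => simp
  | succ n ih =>
    rw [List.ofFn_succ', List.concat_eq_append, List.countP_append, Finset.sum_range_succ, ← ih]
    by_cases h : f n ≤ x <;> simp [h]

theorem empiricalCDF_ofFn (f : ℕ → ℝ) (x : ℝ) (n : ℕ) :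
    empiricalCDF (List.ofFn fun i : Fin n => f i) x =
      (n : ℝ)⁻¹ • ∑ i ∈ Finset.range n, (Iic x).indicator 1 (f i) := by
  rw [empiricalCDF, countP_ofFn_le_eq_sum_indicator, List.length_ofFn, smul_eq_mul, div_eq_inv_mul]

theorem exists_cdf_eq_of_continuous (ν : Measure ℝ) [IsProbabilityMeasure ν]
    (hcont : Continuous (cdf ν)) {c : ℝ} (hc : c ∈ Ioo 0 1) : ∃ q, cdf ν q = c :=
  mem_range_of_exists_le_of_exists_ge hcont
    ((tendsto_cdf_atBot ν).eventually (ge_mem_nhds hc.1)).exists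
    ((tendsto_cdf_atTop ν).eventually (le_mem_nhds hc.2)).exists

section

variable {Ω : Type*} [MeasurableSpace Ω] {μ : Measure Ω}

theorem measureReal_preimage_Iio_le_cdf {X : Ω → ℝ} {ν : Measure ℝ} [IsProbabilityMeasure ν]
    (hX : Measurable X) (hlaw : μ.map X = ν) (q : ℝ) : μ.real (X ⁻¹' Iio q) ≤ cdf ν q := by
  rw [← map_measureReal_apply hX measurableSet_Iio, hlaw, cdf_eq_real]
  exact measureReal_mono Iio_subset_Iic_self

theorem measureReal_lt_kthSmallest_le [IsFiniteMeasure μ] (s : Ω → ℝ) (l : Ω → List ℝ) {k : ℕ}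
    (hk : 1 ≤ k) (hkl : ∀ ω, k ≤ (l ω).length) (q : ℝ) :
    μ.real {ω | s ω < kthSmallest (l ω) k} ≤
      μ.real (s ⁻¹' Iio q) + μ.real {ω | (l ω).countP (· ≤ q) < k} := by
  refine (measureReal_mono fun ω hω => ?_).trans (measureReal_union_le _ _)
  by_cases hs : s ω < q
  · exact Or.inl hs
  · refine Or.inr ((List.countP_mono_left fun x _ hx => ?_).trans_lt
      (countP_le_lt_of_lt_kthSmallest hk (hkl ω) hω))
    simp only [decide_eq_true_eq] at hx ⊢
    linarith

theorem tendstoInMeasure_empiricalCDF [IsProbabilityMeasure μ] {X : ℕ → Ω → ℝ} {ν : Measure ℝ}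
    [IsProbabilityMeasure ν] (hmeas : ∀ i, Measurable (X i)) (hident : ∀ i, μ.map (X i) = ν)
    (hindep : Pairwise fun i j => X i ⟂ᵢ[μ] X j) (x : ℝ) :
    TendstoInMeasure μ (fun n ω => empiricalCDF (List.ofFn fun i : Fin n => X i ω) x) atTop
      (fun _ => cdf ν x) := by
  have hind : Measurable ((Iic x).indicator (1 : ℝ → ℝ)) :=
    measurable_const.indicator measurableSet_Iic
  set Y : ℕ → Ω → ℝ := fun i => (Iic x).indicator 1 ∘ X i
  have hY0 : Y 0 = (X 0 ⁻¹' Iic x).indicator 1 := funext fun ω => (indicator_comp_right _).symm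
  have hidentY : ∀ i, IdentDistrib (Y i) (Y 0) μ μ := fun i =>
    (IdentDistrib.mk (hmeas i).aemeasurable (hmeas 0).aemeasurable
      (by rw [hident, hident])).comp hind
  have hmean : μ[Y 0] = cdf ν x := by
    rw [hY0, integral_indicator_one (hmeas 0 measurableSet_Iic), cdf_eq_real, ← hident 0,
      map_measureReal_apply (hmeas 0) measurableSet_Iic]
  have hint : Integrable (Y 0) μ := by
    rw [hY0]; exact (integrable_const 1).indicator (hmeas 0 measurableSet_Iic)
  have hlaw := strong_law_ae Y hint (fun i j hij => (hindep hij).comp hind hind) hidentY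
  rw [hmean] at hlaw
  have hfreq : (fun n ω => empiricalCDF (List.ofFn fun i : Fin n => X i ω) x) =
      fun (n : ℕ) ω => (n : ℝ)⁻¹ • ∑ i ∈ Finset.range n, Y i ω :=
    funext fun n => funext fun ω => empiricalCDF_ofFn (X · ω) x n
  rw [hfreq]
  exact tendstoInMeasure_of_tendsto_ae (fun n => by fun_prop) hlaw

theorem tendsto_measureReal_countP_lt [IsProbabilityMeasure μ] {X : ℕ → Ω → ℝ} {ν : Measure ℝ}
    [IsProbabilityMeasure ν] (hmeas : ∀ i, Measurable (X i)) (hident : ∀ i, μ.map (X i) = ν)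
    (hindep : Pairwise fun i j => X i ⟂ᵢ[μ] X j) {q δ : ℝ} (hδ : 0 < δ) {k : ℕ → ℕ}
    (hk : ∀ n, (k n : ℝ) ≤ (cdf ν q - δ) * n) :
    Tendsto (fun n => μ.real {ω | (List.ofFn fun i : Fin n => X i ω).countP (· ≤ q) < k n})
      atTop (𝓝 0) := by
  have hdev := (ENNReal.tendsto_toReal ENNReal.zero_ne_top).comp <|
    tendstoInMeasure_empiricalCDF hmeas hident hindep q (ENNReal.ofReal δ) (by positivity)
  refine squeeze_zero (fun _ => measureReal_nonneg) (fun n => measureReal_mono fun ω hω => ?_) hdev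
  set m := (List.ofFn fun i : Fin n => X i ω).countP (· ≤ q)
  have hlt : (m : ℝ) < (cdf ν q - δ) * n := (Nat.cast_lt.2 hω).trans_le (hk n)
  have hn : (0 : ℝ) < n := by
    rcases n.eq_zero_or_pos with rfl | hn
    · rw [Nat.cast_zero, mul_zero] at hlt
      exact absurd hlt (Nat.cast_nonneg m).not_gt
    · exact Nat.cast_pos.2 hn
  have hfreq : (m : ℝ) / n < cdf ν q - δ := (div_lt_iff₀ hn).2 hlt
  show ENNReal.ofReal δ ≤ edist (empiricalCDF _ q) (cdf ν q)
  rw [edist_dist, Real.dist_eq, empiricalCDF, List.length_ofFn, abs_sub_comm]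
  exact ENNReal.ofReal_le_ofReal (by linarith [le_abs_self (cdf ν q - m / n)])

end

/-- For i.i.d. reals `s, s_1, …, s_n` whose common CDF is Lipschitz continuous, with
`q̂_{α/2}` the `⌊(α/2)n⌋`-th order statistic of `s_1,…,s_n`, one has
`lim_{n→∞} P(s < q̂_{α/2}) ≤ α/2`. -/
theorem prob_below_empirical_quantile {Ω : Type*} [MeasurableSpace Ω] (μ : Measure Ω)
    [IsProbabilityMeasure μ] (u : ℕ → Ω → ℝ) (ν : Measure ℝ) [IsProbabilityMeasure ν]
    (hmeas : ∀ i, Measurable (u i))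
    (hident : ∀ i, Measure.map (u i) μ = ν)
    (hindep : iIndepFun u μ)
    (F : ℝ → ℝ) (hF : ∀ x, F x = (ν (Set.Iic x)).toReal)
    (L : NNReal) (hLip : LipschitzWith L F)
    (α : ℝ) (hα : α ∈ Set.Ioo (0 : ℝ) 1) :
    Filter.limsup (fun n : ℕ =>
      (μ {ω | u 0 ω < kthSmallest (List.ofFn (fun i : Fin n => u (i + 1) ω))
        ⌊(α / 2) * n⌋₊}).toReal) atTop ≤ α / 2 := by
  obtain ⟨hα0, hα1⟩ := hα
  have hcdf : F = cdf ν := funext fun x => by rw [hF, cdf_eq_real, measureReal_def]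
  refine le_of_forall_pos_le_add fun ε hε => limsup_le_of_le
    (isCoboundedUnder_le_of_le atTop fun _ => ENNReal.toReal_nonneg) ?_
  obtain ⟨δ, hδ0, hδ⟩ : ∃ δ, 0 < δ ∧ δ < min ε (1 - α / 2) :=
    exists_between (lt_min hε (by linarith))
  obtain ⟨q, hq⟩ := exists_cdf_eq_of_continuous ν (hcdf ▸ hLip.continuous)
    (c := α / 2 + δ) ⟨by positivity, by linarith [min_le_right ε (1 - α / 2)]⟩
  have hfew := tendsto_measureReal_countP_lt (X := fun i => u (i + 1)) (fun i => hmeas _)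
    (fun i => hident _) (fun i j hij => hindep.indepFun (by simpa using hij)) hδ0
    (k := fun n : ℕ => ⌊α / 2 * n⌋₊) fun n => by
      rw [hq, add_sub_cancel_right]; exact Nat.floor_le (by positivity)
  have hk : ∀ᶠ n : ℕ in atTop, 1 ≤ ⌊α / 2 * n⌋₊ := by
    simpa only [Nat.one_le_floor_iff] using
      (tendsto_natCast_atTop_atTop.const_mul_atTop (by positivity)).eventually_ge_atTop 1
  filter_upwards [hk, hfew.eventually (gt_mem_nhds (sub_pos.2 (hδ.trans_le (min_le_left _ _))))]
    with n hk1 hsmall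
  calc (μ _).toReal
      ≤ μ.real (u 0 ⁻¹' Iio q) + μ.real {ω | (List.ofFn fun i : Fin n => u (i + 1) ω).countP
          (· ≤ q) < ⌊α / 2 * n⌋₊} :=
        measureReal_lt_kthSmallest_le (u 0) _ hk1 (fun ω => by
          rw [List.length_ofFn]; exact Nat.floor_le_of_le (by nlinarith)) q
    _ ≤ cdf ν q + (ε - δ) := add_le_add (measureReal_preimage_Iio_le_cdf (hmeas 0) (hident 0) q)
        hsmall.le
    _ = α / 2 + ε := by rw [hq]; ring
end
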